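/- arXiv:q-bio/0511039 — 3 statements merged into one kernel-verified Lean document; each statement's English description precedes it below -/
import Mathlib

section
/- Stanley's theorem: Let G be a finite poset with minimum 0̂ and maximum 1̂, let G' = G ∖ {0̂, 1̂} have m−2 elements, let A be the (m−2)×(m−2) anti-adjacency matrix of G' (entry in row g, column h equal to 0 if g < h and 1 otherwise, including on the diagonal), and let F' = diag(f_g : g ∈ G'). Then det(I + F'·A) equals the risk polynomial RP(G; f), i.e., the sum over all chains 0̂ = g₀ < g₁ < ... < g_k = 1̂ in G of f_{g₁}⋯f_{g_{k−1}}. -/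
open scoped Classical

/-- The principal minor of the anti-adjacency matrix over a finset `S` is `1` if `S` is a
chain and `0` otherwise. -/
lemma det_antiAdj {P : Type} [Fintype P] [DecidableEq P] [PartialOrder P] (S : Finset P) :
    Matrix.det (Matrix.of fun g h : {x // x ∈ S} =>
        if (g : P) < (h : P) then (0 : ℝ) else 1)
      = if IsChain (· ≤ ·) (S : Set P) then 1 else 0 := by
  classical
  induction S using Finset.strongInduction with
  | _ S ih =>
  rcases S.eq_empty_or_nonempty with rfl | hne
  · haveI : IsEmpty {x // x ∈ (∅ : Finset P)} :=
      ⟨fun x => absurd x.2 (Finset.notMem_empty _)⟩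
    rw [Matrix.det_isEmpty]
    simp
  obtain ⟨m, hmS, hmmax⟩ := S.exists_maximal hne
  by_cases hall : ∀ t ∈ S, t ≤ m
  · -- unique maximal element: cofactor expansion at `m`
    set N : Matrix {x // x ∈ S} {x // x ∈ S} ℝ :=
      Matrix.of fun g h : {x // x ∈ S} => if (g : P) < (h : P) then (0 : ℝ) else 1 with hN
    let e : ({x // x ∈ S.erase m} ⊕ Unit) ≃ {x // x ∈ S} :=
      { toFun := Sum.elim (fun x => ⟨x.1, Finset.mem_of_mem_erase x.2⟩) (fun _ => ⟨m, hmS⟩)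
        invFun := fun x => if h : x.1 = m then Sum.inr () else
          Sum.inl ⟨x.1, Finset.mem_erase.2 ⟨h, x.2⟩⟩
        left_inv := by
          rintro (⟨x, hx⟩ | ⟨⟩)
          · simp [(Finset.mem_erase.1 hx).1]
          · simp
        right_inv := by
          rintro ⟨x, hx⟩
          by_cases h : x = m
          · subst h; simp
          · simp [h] }
    have hblock : N.submatrix e e =
        Matrix.fromBlocks
          (Matrix.of fun g h : {x // x ∈ S.erase m} =>
            if (g : P) < (h : P) then (0 : ℝ) else 1)
          0 (Matrix.of fun (_ : Unit) (_ : {x // x ∈ S.erase m}) => (1 : ℝ)) 1 := by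
      ext i j
      rcases i with g | _ <;> rcases j with h | _
      · rfl
      · -- entry (g, m): g < m since g ≤ m and g ≠ m
        have hg : (g : P) < m := lt_of_le_of_ne (hall _ (Finset.mem_of_mem_erase g.2))
          (Finset.mem_erase.1 g.2).1
        simp [e, N, Matrix.fromBlocks, hg]
      · -- entry (m, h): ¬ m < h
        have hh : ¬ (m : P) < (h : P) := fun hlt => lt_irrefl _ (lt_of_lt_of_le hlt (hmmax (Finset.mem_of_mem_erase h.2) hlt.le))
        simp [e, N, Matrix.fromBlocks, hh]
      · simp [e, N, Matrix.fromBlocks, Matrix.one_apply]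
    have hRec := ih (S.erase m) (Finset.erase_ssubset hmS)
    have hchain : IsChain (· ≤ ·) (S : Set P)
        ↔ IsChain (· ≤ ·) ((S.erase m : Finset P) : Set P) := by
      constructor
      · intro hc
        exact hc.mono (by exact_mod_cast Finset.erase_subset _ _)
      · intro hc
        have : (insert m ((S.erase m : Finset P) : Set P)) = (S : Set P) := by
          rw [← Finset.coe_insert, Finset.insert_erase hmS]
        rw [← this]
        exact hc.insert fun b hb _ => Or.inr (hall b (Finset.mem_of_mem_erase hb))
    calc N.det = (N.submatrix e e).det := (Matrix.det_submatrix_equiv_self e N).symm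
      _ = _ := by
        rw [hblock, Matrix.det_fromBlocks_zero₁₂, Matrix.det_one, mul_one, hRec]
        simp [hchain]
  · -- two maximal elements: two all-ones rows
    push_neg at hall
    obtain ⟨t, htS, htm⟩ := hall
    obtain ⟨t', ht'mem, ht'max⟩ := (S.filter (fun x => t ≤ x)).exists_maximal
      ⟨t, Finset.mem_filter.2 ⟨htS, le_rfl⟩⟩
    rw [Finset.mem_filter] at ht'mem
    obtain ⟨ht'S, htt'⟩ := ht'mem
    have ht'm : t' ≠ m := fun h => htm (h ▸ htt')
    have ht'maxS : ∀ x ∈ S, ¬ t' < x := fun x hx hlt =>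
      lt_irrefl _ (lt_of_lt_of_le hlt (ht'max (Finset.mem_filter.2 ⟨hx, htt'.trans hlt.le⟩) hlt.le))
    have hrow : (Matrix.of fun g h : {x // x ∈ S} =>
        if (g : P) < (h : P) then (0 : ℝ) else 1) ⟨m, hmS⟩
        = (Matrix.of fun g h : {x // x ∈ S} =>
        if (g : P) < (h : P) then (0 : ℝ) else 1) ⟨t', ht'S⟩ := by
      funext h
      simp only [Matrix.of_apply]
      rw [if_neg (fun hlt => lt_irrefl _ (lt_of_lt_of_le hlt (hmmax h.2 hlt.le))), if_neg (ht'maxS _ h.2)]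
    have hne' : (⟨m, hmS⟩ : {x // x ∈ S}) ≠ ⟨t', ht'S⟩ := by
      simp [Ne, Subtype.ext_iff, ht'm.symm]
    rw [Matrix.det_zero_of_row_eq hne' hrow]
    have : ¬ IsChain (· ≤ ·) (S : Set P) := by
      intro hc
      rcases hc (by exact_mod_cast hmS) (by exact_mod_cast ht'S)
        (fun h => ht'm (h.symm)) with h | h
      · exact ht'm (le_antisymm (hmmax ht'S h) h)
      · exact htm (htt'.trans h)
    simp [this]


lemma det_piecewise {n : Type} [Fintype n] [DecidableEq n] (M : Matrix n n ℝ) (s : Finset n) :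
    Matrix.det (n := n) (s.piecewise (fun i => M i) (fun i => (1 : Matrix n n ℝ) i))
      = Matrix.det (M.submatrix (fun x : {x // x ∈ s} => (x : n)) (fun x => (x : n))) := by
  classical
  set N : Matrix n n ℝ := Matrix.of (s.piecewise (fun i => M i) (fun i => (1 : Matrix n n ℝ) i))
    with hNdef
  let e : ({x // x ∈ s} ⊕ {x // ¬ x ∈ s}) ≃ n := Equiv.sumCompl (· ∈ s)
  have hblock : N.submatrix e e =
      Matrix.fromBlocks
        (M.submatrix (fun x : {x // x ∈ s} => (x : n)) (fun x : {x // x ∈ s} => (x : n)))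
        (M.submatrix (fun x : {x // x ∈ s} => (x : n)) (fun x : {x // ¬ x ∈ s} => (x : n)))
        0 1 := by
    ext i j
    rcases i with g | g <;> rcases j with h | h
    · simp [N, e, Matrix.fromBlocks, Finset.piecewise, g.2]
    · simp [N, e, Matrix.fromBlocks, Finset.piecewise, g.2]
    · have : (g : n) ≠ (h : n) := fun hc => g.2 (hc ▸ h.2)
      simp [N, e, Matrix.fromBlocks, Finset.piecewise, g.2, Matrix.one_apply, this]
    · simp [N, e, Matrix.fromBlocks, Finset.piecewise, g.2, Matrix.one_apply,
        Subtype.ext_iff]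
  calc N.det = (N.submatrix e e).det := (Matrix.det_submatrix_equiv_self e N).symm
    _ = _ := by rw [hblock, Matrix.det_fromBlocks_zero₂₁, Matrix.det_one, mul_one]

lemma det_one_add_sum_minors {n : Type} [Fintype n] [DecidableEq n] (M : Matrix n n ℝ) :
    Matrix.det (1 + M) = ∑ s : Finset n,
      Matrix.det (M.submatrix (fun x : {x // x ∈ s} => (x : n)) (fun x => (x : n))) := by
  classical
  have h0 : (1 + M : Matrix n n ℝ)
      = ((fun i => M i) + (fun i => (1 : Matrix n n ℝ) i) : n → n → ℝ) := by
    funext i j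
    simp [Matrix.add_apply, Pi.add_apply, add_comm]
  have h1 := (Matrix.detRowAlternating (n := n) (R := ℝ)).toMultilinearMap.map_add_univ
    (fun i => M i) (fun i => (1 : Matrix n n ℝ) i)
  calc Matrix.det (1 + M)
      = Matrix.detRowAlternating ((fun i => M i) + (fun i => (1 : Matrix n n ℝ) i)) := by
        rw [← h0]; rfl
    _ = ∑ s : Finset n,
        Matrix.detRowAlternating (s.piecewise (fun i => M i) (fun i => (1 : Matrix n n ℝ) i)) :=
        h1
    _ = _ := by
        refine Finset.sum_congr rfl fun s _ => ?_
        exact det_piecewise M s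

/-- The risk polynomial of a finite bounded poset `G`: the sum over all chains
`⊥ = g₀ < g₁ < ⋯ < g_k = ⊤` of the products `f_{g₁}⋯f_{g_{k-1}}`, identified with the
sum over all chains of `G' = G ∖ {⊥, ⊤}` of the products of their fitness values. -/
noncomputable def riskPoly (G : Type) [Fintype G] [PartialOrder G] [BoundedOrder G]
    (f : G → ℝ) : ℝ :=
  ∑ S ∈ Finset.univ.filter (fun S : Finset G =>
      IsChain (· ≤ ·) (S : Set G) ∧ ∀ g ∈ S, g ≠ ⊥ ∧ g ≠ ⊤),
    ∏ g ∈ S, f g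

/-- Stanley's theorem: `det (I + F'·A)` equals the risk polynomial of `G`, where `A` is
the anti-adjacency matrix of `G' = G ∖ {⊥, ⊤}` (entry `0` if `g < h` and `1` otherwise)
and `F' = diag (f_g : g ∈ G')`. -/
theorem stanley_det_eq_riskPoly (G : Type) [Fintype G] [PartialOrder G]
    [BoundedOrder G] (hG : (⊥ : G) ≠ ⊤) (f : G → ℝ) :
    Matrix.det
      (1 + Matrix.diagonal (fun g : {g : G // g ≠ ⊥ ∧ g ≠ ⊤} => f g.1) *
        Matrix.of (fun g h : {g : G // g ≠ ⊥ ∧ g ≠ ⊤} =>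
          if g.1 < h.1 then (0 : ℝ) else 1)) = riskPoly G f := by
  classical
  set P := {g : G // g ≠ ⊥ ∧ g ≠ ⊤} with hP
  set A : Matrix P P ℝ := Matrix.of (fun g h : P => if g.1 < h.1 then (0 : ℝ) else 1) with hA
  set D : Matrix P P ℝ := Matrix.diagonal (fun g : P => f g.1) with hD
  rw [det_one_add_sum_minors (D * A)]
  have key : ∀ s : Finset P,
      Matrix.det ((D * A).submatrix (fun x : {x // x ∈ s} => (x : P)) (fun x => (x : P)))
        = if IsChain (· ≤ ·) (s : Set P) then ∏ g ∈ s, f g.1 else 0 := by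
    intro s
    have hsub : (D * A).submatrix (fun x : {x // x ∈ s} => (x : P))
        (fun x : {x // x ∈ s} => (x : P))
        = Matrix.of (fun i j : {x // x ∈ s} => f (i : P).1 *
            (Matrix.of fun g h : {x // x ∈ s} =>
              if (g : P) < (h : P) then (0 : ℝ) else 1) i j) := by
      ext i j
      simp only [Matrix.submatrix_apply, hD, Matrix.diagonal_mul, Matrix.of_apply]
      congr 1
    rw [hsub, Matrix.det_mul_column]
    rw [det_antiAdj s]
    rw [mul_ite, mul_one, mul_zero]
    congr 1
    exact Finset.prod_coe_sort s (fun g => f g.1)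
  rw [Finset.sum_congr rfl fun s _ => key s]
  rw [← Finset.sum_filter]
  unfold riskPoly
  refine Finset.sum_bij' (fun s _ => s.map (Function.Embedding.subtype _))
    (fun S hS => S.subtype (fun g => g ≠ ⊥ ∧ g ≠ ⊤)) ?_ ?_ ?_ ?_ ?_
  · -- maps into target filter
    intro s hs
    rw [Finset.mem_filter] at hs ⊢
    refine ⟨Finset.mem_univ _, ?_, ?_⟩
    · intro a ha b hb hab
      rw [Finset.mem_coe, Finset.mem_map] at ha hb
      obtain ⟨x, hx, rfl⟩ := ha
      obtain ⟨y, hy, rfl⟩ := hb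
      have hxy : x ≠ y := fun h => hab (by rw [h])
      rcases hs.2 (Finset.mem_coe.2 hx) (Finset.mem_coe.2 hy) hxy with h | h
      · exact Or.inl h
      · exact Or.inr h
    · intro g hg
      rw [Finset.mem_map] at hg
      obtain ⟨x, _, rfl⟩ := hg
      exact x.2
  · -- back into source filter
    intro S hS
    rw [Finset.mem_filter] at hS ⊢
    refine ⟨Finset.mem_univ _, ?_⟩
    intro a ha b hb hab
    rw [Finset.mem_coe, Finset.mem_subtype] at ha hb
    have hab' : (a : G) ≠ (b : G) := fun h => hab (Subtype.ext h)
    rcases hS.2.1 (Finset.mem_coe.2 ha) (Finset.mem_coe.2 hb) hab' with h | h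
    · exact Or.inl h
    · exact Or.inr h
  · -- left inverse
    intro s hs
    ext x
    rw [Finset.mem_subtype, Finset.mem_map]
    constructor
    · rintro ⟨y, hy, hyx⟩
      have hxy : y = x := Subtype.ext (by simpa using hyx)
      exact hxy ▸ hy
    · intro hx
      exact ⟨x, hx, rfl⟩
  · -- right inverse
    intro S hS
    rw [Finset.mem_filter] at hS
    exact Finset.subtype_map_of_mem hS.2.2
  · -- values agree
    intro s hs
    rw [Finset.prod_map]
    rfl
end

section
/- Linear extensions formula: Let E be a poset on [n] = {1,...,n} whose order relation is compatible with the usual linear order (i.e., the identity is a linear extension). For a linear extension π (an order-preserving bijection E → [n], viewed as a permutation of [n]), let g^{(i)} = π^{-1}({1,...,i}) and define f(π) = ∏_{i: π^{-1}(i+1) > π^{-1}(i)} (f_{g^{(i)}} + 1) · ∏_{i: π^{-1}(i+1) < π^{-1}(i)} f_{g^{(i)}}, both products over i = 1,...,n−1, i.e., the first over ascents (the element added at step i+1 is larger than the element added at step i) and the second over descents. Then the risk polynomial RP(J(E); f) = Σ over chains ∅ = g₀ ⊂ ... ⊂ g_k = E of order ideals of f_{g₁}⋯f_{g_{k−1}}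 equals Σ_π f(π), summed over all linear extensions π of E. -/
open scoped Classical
open Fin.NatCast
set_option linter.unusedSectionVars false

namespace RiskAux
variable {n : ℕ} [NeZero n]

noncomputable def gset (π : Equiv.Perm (Fin n)) (i : ℕ) : Finset (Fin n) :=
  Finset.univ.filter (fun x : Fin n => (π x : ℕ) < i + 1)

def asc (π : Equiv.Perm (Fin n)) (i : ℕ) : Prop :=
  π.symm ((i : ℕ) : Fin n) < π.symm (((i + 1 : ℕ) : ℕ) : Fin n)

noncomputable def keyS (S : Finset (Finset (Fin n))) (x : Fin n) : ℕ :=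
  (S.filter (fun g => x ∉ g)).card

noncomputable def hS (S : Finset (Finset (Fin n))) (x : Fin n) : ℕ :=
  keyS S x * n + x.val

noncomputable def rk (S : Finset (Finset (Fin n))) (x : Fin n) : ℕ :=
  (Finset.univ.filter (fun z => hS S z < hS S x)).card

lemma card_filter_perm_val_lt (π : Equiv.Perm (Fin n)) {m : ℕ} (hm : m ≤ n) :
    (Finset.univ.filter (fun z => (π z : ℕ) < m)).card = m := by
  have h : (Finset.univ.filter (fun z => (π z : ℕ) < m)).card = (Finset.range m).card := by
    apply Finset.card_bij (fun z _ => (π z : ℕ))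
    · intro a ha
      simp only [Finset.mem_filter] at ha
      exact Finset.mem_range.2 ha.2
    · intro a _ b _ h
      exact π.injective (Fin.ext h)
    · intro b hb
      have hbn : b < n := lt_of_lt_of_le (Finset.mem_range.1 hb) hm
      refine ⟨π.symm ⟨b, hbn⟩, ?_, ?_⟩ <;>
        simp [Finset.mem_range.1 hb]
  rw [h, Finset.card_range]

lemma key_filter_comparable {S : Finset (Finset (Fin n))}
    (hc : IsChain (· ⊆ ·) (S : Set (Finset (Fin n)))) (x y : Fin n) :
    S.filter (fun g => x ∉ g) ⊆ S.filter (fun g => y ∉ g) ∨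
    S.filter (fun g => y ∉ g) ⊆ S.filter (fun g => x ∉ g) := by
  by_contra hcon
  push_neg at hcon
  obtain ⟨h1, h2⟩ := hcon
  obtain ⟨g, hg, hgy⟩ := Finset.not_subset.1 h1
  obtain ⟨g', hg', hg'x⟩ := Finset.not_subset.1 h2
  simp only [Finset.mem_filter, not_and, not_not] at hg hgy hg' hg'x
  have hyg : y ∈ g := hgy hg.1
  have hxg' : x ∈ g' := hg'x hg'.1
  have hne : g ≠ g' := fun h => hg.2 (h ▸ hxg')
  rcases hc (Finset.mem_coe.2 hg.1) (Finset.mem_coe.2 hg'.1) hne with hss | hss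
  · exact hg'.2 (hss hyg)
  · exact hg.2 (hss hxg')

lemma keyS_lt {S : Finset (Finset (Fin n))}
    (hc : IsChain (· ⊆ ·) (S : Set (Finset (Fin n)))) {g : Finset (Fin n)}
    (hg : g ∈ S) {x z : Fin n} (hx : x ∈ g) (hz : z ∉ g) :
    keyS S x < keyS S z := by
  apply Finset.card_lt_card
  have hsub : S.filter (fun g' => x ∉ g') ⊆ S.filter (fun g' => z ∉ g') := by
    intro g' hg'
    simp only [Finset.mem_filter] at hg' ⊢
    refine ⟨hg'.1, fun hzg' => hg'.2 ?_⟩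
    rcases eq_or_ne g' g with rfl | hne
    · exact absurd hzg' hz
    · rcases hc (Finset.mem_coe.2 hg'.1) (Finset.mem_coe.2 hg) hne with hss | hss
      · exact absurd (hss hzg') hz
      · exact hss hx
  refine (Finset.ssubset_iff_of_subset hsub).2 ⟨g, ?_, ?_⟩
  · simp [hg, hz]
  · simp [hx]

lemma hS_lt_of_key_lt {S : Finset (Finset (Fin n))} {x y : Fin n}
    (h : keyS S x < keyS S y) : hS S x < hS S y := by
  unfold hS
  have hx : (x : ℕ) < n := x.isLt
  have h2 : keyS S x * n + n ≤ keyS S y * n := by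
    calc keyS S x * n + n = (keyS S x + 1) * n := by ring
    _ ≤ keyS S y * n := Nat.mul_le_mul_right n (Nat.succ_le_of_lt h)
  omega

lemma key_le_of_hS_lt {S : Finset (Finset (Fin n))} {x y : Fin n}
    (h : hS S x < hS S y) : keyS S x ≤ keyS S y := by
  by_contra hcon
  exact absurd (hS_lt_of_key_lt (Nat.lt_of_not_le hcon)) (by omega)

lemma hS_inj (S : Finset (Finset (Fin n))) {x y : Fin n}
    (h : hS S x = hS S y) : x = y := by
  apply Fin.ext
  have hx := x.isLt
  have hy := y.isLt
  have h1 : hS S x % n = hS S y % n := by rw [h]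
  unfold hS at h1
  rw [mul_comm (keyS S x) n, mul_comm (keyS S y) n] at h1
  rwa [Nat.mul_add_mod, Nat.mul_add_mod, Nat.mod_eq_of_lt hx, Nat.mod_eq_of_lt hy] at h1

lemma rk_lt (S : Finset (Finset (Fin n))) (x : Fin n) : rk S x < n := by
  have h1 : Finset.univ.filter (fun z => hS S z < hS S x) ⊆ Finset.univ.erase x := by
    intro z hz
    simp only [Finset.mem_filter] at hz
    refine Finset.mem_erase.2 ⟨fun h => ?_, Finset.mem_univ z⟩
    subst h; omega
  have h2 := Finset.card_le_card h1
  rw [Finset.card_erase_of_mem (Finset.mem_univ x), Finset.card_univ, Fintype.card_fin] at h2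
  have := Nat.pos_of_ne_zero (NeZero.ne n)
  unfold rk
  omega

lemma rk_lt_of_hS_lt {S : Finset (Finset (Fin n))} {z x : Fin n}
    (h : hS S z < hS S x) : rk S z < rk S x := by
  apply Finset.card_lt_card
  have hsub : Finset.univ.filter (fun u => hS S u < hS S z) ⊆
      Finset.univ.filter (fun u => hS S u < hS S x) := by
    intro u hu
    simp only [Finset.mem_filter] at hu ⊢
    exact ⟨Finset.mem_univ u, lt_trans hu.2 h⟩
  refine (Finset.ssubset_iff_of_subset hsub).2 ⟨z, ?_, ?_⟩ <;> simp [h]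

lemma hS_lt_of_rk_lt {S : Finset (Finset (Fin n))} {z x : Fin n}
    (h : rk S z < rk S x) : hS S z < hS S x := by
  by_contra hcon
  rcases Nat.lt_or_ge (hS S x) (hS S z) with h1 | h1
  · exact absurd (rk_lt_of_hS_lt h1) (by omega)
  · have : hS S z = hS S x := by omega
    rw [hS_inj S this] at h
    omega

lemma rkFin_inj (S : Finset (Finset (Fin n))) :
    Function.Injective (fun x : Fin n => (⟨rk S x, rk_lt S x⟩ : Fin n)) := by
  intro x y hxy
  have h : rk S x = rk S y := congrArg Fin.val hxy
  by_contra hne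
  have hh : hS S x ≠ hS S y := fun e => hne (hS_inj S e)
  rcases lt_or_gt_of_ne hh with hlt | hlt
  · exact absurd (rk_lt_of_hS_lt hlt) (by omega)
  · exact absurd (rk_lt_of_hS_lt hlt) (by omega)

noncomputable def permS (S : Finset (Finset (Fin n))) : Equiv.Perm (Fin n) :=
  Equiv.ofBijective (fun x : Fin n => (⟨rk S x, rk_lt S x⟩ : Fin n))
    (Finite.injective_iff_bijective.1 (rkFin_inj S))

lemma permS_val (S : Finset (Finset (Fin n))) (x : Fin n) :
    ((permS S) x : ℕ) = rk S x := rfl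

lemma chain_ideal_eq_filter {S : Finset (Finset (Fin n))}
    (hc : IsChain (· ⊆ ·) (S : Set (Finset (Fin n)))) {g : Finset (Fin n)}
    (hg : g ∈ S) :
    g = Finset.univ.filter (fun z => rk S z < g.card) := by
  have hsub : g ⊆ Finset.univ.filter (fun z => rk S z < g.card) := by
    intro z hz
    simp only [Finset.mem_filter, Finset.mem_univ, true_and]
    have h1 : Finset.univ.filter (fun u => hS S u < hS S z) ⊆ g.erase z := by
      intro u hu
      simp only [Finset.mem_filter, Finset.mem_univ, true_and] at hu
      refine Finset.mem_erase.2 ⟨fun he => ?_, ?_⟩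
      · subst he; omega
      · by_contra hug
        exact absurd (hS_lt_of_key_lt (keyS_lt hc hg hz hug)) (by omega)
    have h2 := Finset.card_le_card h1
    have hcard : (g.erase z).card = g.card - 1 := Finset.card_erase_of_mem hz
    have hpos : 0 < g.card := Finset.card_pos.2 ⟨z, hz⟩
    unfold rk
    omega
  have hm : g.card ≤ n := by
    have := Finset.card_le_univ g
    simpa using this
  have hcards : (Finset.univ.filter (fun z => rk S z < g.card)).card = g.card := by
    have heq : (Finset.univ.filter (fun z => rk S z < g.card))
        = (Finset.univ.filter (fun z => ((permS S) z : ℕ) < g.card)) := rfl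
    rw [heq, card_filter_perm_val_lt _ hm]
  exact Finset.eq_of_subset_of_card_le hsub (le_of_eq hcards)

lemma mem_iff_rk_lt {S : Finset (Finset (Fin n))}
    (hc : IsChain (· ⊆ ·) (S : Set (Finset (Fin n)))) {g : Finset (Fin n)}
    (hg : g ∈ S) (z : Fin n) : z ∈ g ↔ rk S z < g.card := by
  conv_lhs => rw [chain_ideal_eq_filter hc hg]
  simp

lemma permS_linext {S : Finset (Finset (Fin n))}
    (r : Fin n → Fin n → Prop)
    (hcompat : ∀ i j : Fin n, r i j → i ≤ j)
    (hideal : ∀ g ∈ S, ∀ i j : Fin n, r i j → j ∈ g → i ∈ g) :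
    ∀ x y : Fin n, r x y → permS S x ≤ permS S y := by
  intro x y hrxy
  rcases eq_or_ne x y with rfl | hne
  · exact le_refl _
  have hxy : (x : ℕ) < (y : ℕ) := by
    have h1 : x ≤ y := hcompat x y hrxy
    have h2 : x ≠ y := hne
    exact lt_of_le_of_ne (Fin.le_def.1 h1) (fun h => h2 (Fin.ext h))
  have hkey : keyS S x ≤ keyS S y := by
    apply Finset.card_le_card
    intro g hgf
    simp only [Finset.mem_filter] at hgf ⊢
    refine ⟨hgf.1, fun hyg => hgf.2 (hideal g hgf.1 x y hrxy hyg)⟩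
  have hhS : hS S x < hS S y := by
    unfold hS
    have := Nat.mul_le_mul_right n hkey
    omega
  exact le_of_lt (rk_lt_of_hS_lt hhS)

lemma gset_card {π : Equiv.Perm (Fin n)} {i : ℕ} (h : i + 1 ≤ n) :
    (gset π i).card = i + 1 := card_filter_perm_val_lt π h

lemma gset_mono {π : Equiv.Perm (Fin n)} {i j : ℕ} (h : i ≤ j) :
    gset π i ⊆ gset π j := by
  intro x hx
  simp only [gset, Finset.mem_filter, Finset.mem_univ, true_and] at hx ⊢
  omega

lemma gset_chain (π : Equiv.Perm (Fin n)) (T : Finset ℕ) :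
    IsChain (· ⊆ ·) ((T.image (gset π) : Finset (Finset (Fin n))) : Set (Finset (Fin n))) := by
  intro a ha b hb _
  simp only [Finset.coe_image, Set.mem_image, Finset.mem_coe] at ha hb
  obtain ⟨i, _, rfl⟩ := ha
  obtain ⟨j, _, rfl⟩ := hb
  rcases le_total i j with h | h
  · exact Or.inl (gset_mono h)
  · exact Or.inr (gset_mono h)

lemma gset_ideal {π : Equiv.Perm (Fin n)} (r : Fin n → Fin n → Prop)
    (hlin : ∀ i j : Fin n, r i j → π i ≤ π j) (i : ℕ) :
    ∀ a b : Fin n, r a b → b ∈ gset π i → a ∈ gset π i := by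
  intro a b hab hb
  simp only [gset, Finset.mem_filter, Finset.mem_univ, true_and] at hb ⊢
  have := Fin.le_def.1 (hlin a b hab)
  omega

lemma gset_ne_empty {π : Equiv.Perm (Fin n)} {i : ℕ} (h : i + 1 ≤ n) :
    gset π i ≠ ∅ := by
  intro hcon
  have := gset_card (π := π) h
  rw [hcon] at this
  simp at this

lemma gset_ne_univ {π : Equiv.Perm (Fin n)} {i : ℕ} (h : i < n - 1) :
    gset π i ≠ Finset.univ := by
  intro hcon
  have hn := Nat.pos_of_ne_zero (NeZero.ne n)
  have h1 : i + 1 ≤ n := by omega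
  have := gset_card (π := π) h1
  rw [hcon, Finset.card_univ, Fintype.card_fin] at this
  omega

lemma gset_inj {π : Equiv.Perm (Fin n)} {i j : ℕ} (hi : i < n - 1) (hj : j < n - 1)
    (h : gset π i = gset π j) : i = j := by
  have h1 : (gset π i).card = i + 1 := gset_card (by omega)
  have h2 : (gset π j).card = j + 1 := gset_card (by omega)
  rw [h, h2] at h1
  omega
lemma symm_lt_of_ascents (π : Equiv.Perm (Fin n)) :
    ∀ q, ∀ (hq : q < n), ∀ p, ∀ (hpq : p < q),
    (∀ j, p ≤ j → j < q → asc π j) →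
    π.symm ⟨p, hpq.trans hq⟩ < π.symm ⟨q, hq⟩ := by
  intro q
  induction q with
  | zero => intro hq p hpq; omega
  | succ q ih =>
    intro hq p hpq h
    have hq' : q < n := by omega
    have hcast : ((q : ℕ) : Fin n) = ⟨q, hq'⟩ := Fin.ext (Fin.val_cast_of_lt hq')
    have hcast1 : ((q + 1 : ℕ) : Fin n) = ⟨q + 1, hq⟩ := Fin.ext (Fin.val_cast_of_lt hq)
    have hascq : π.symm ⟨q, hq'⟩ < π.symm ⟨q + 1, hq⟩ := by
      have hq2 := h q (by omega) (by omega)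
      unfold asc at hq2
      rwa [hcast, hcast1] at hq2
    rcases eq_or_lt_of_le (Nat.le_of_lt_succ hpq) with rfl | hplt
    · exact hascq
    · exact lt_trans (ih hq' p hplt (fun j h1 h2 => h j h1 (by omega))) hascq

lemma chain_asc {S : Finset (Finset (Fin n))}
    (hc : IsChain (· ⊆ ·) (S : Set (Finset (Fin n))))
    {i : ℕ} (hi : i < n - 1)
    (hiT : i ∉ S.image (fun g => g.card - 1)) : asc (permS S) i := by
  have hn := Nat.pos_of_ne_zero (NeZero.ne n)
  have hn1 : i < n := by omega
  have hn2 : i + 1 < n := by omega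
  unfold asc
  set x := (permS S).symm ((i : ℕ) : Fin n) with hxdef
  set y := (permS S).symm (((i + 1 : ℕ) : ℕ) : Fin n) with hydef
  have hrkx : rk S x = i := by
    have : (permS S) x = ((i : ℕ) : Fin n) := (permS S).apply_symm_apply _
    have h2 := congrArg Fin.val this
    rw [permS_val] at h2
    rwa [Fin.val_cast_of_lt hn1] at h2
  have hrky : rk S y = i + 1 := by
    have : (permS S) y = (((i + 1 : ℕ) : ℕ) : Fin n) := (permS S).apply_symm_apply _
    have h2 := congrArg Fin.val this
    rw [permS_val] at h2
    rwa [Fin.val_cast_of_lt hn2] at h2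
  have hhS : hS S x < hS S y := hS_lt_of_rk_lt (by omega)
  have hkey : keyS S x ≤ keyS S y := key_le_of_hS_lt hhS
  rcases eq_or_lt_of_le hkey with heq | hlt
  · have : (x : ℕ) < (y : ℕ) := by
      unfold hS at hhS
      rw [heq] at hhS
      omega
    exact Fin.lt_def.2 this
  · exfalso
    have hcardlt : (S.filter (fun g => x ∉ g)).card < (S.filter (fun g => y ∉ g)).card := hlt
    have hsub : S.filter (fun g => x ∉ g) ⊂ S.filter (fun g => y ∉ g) := by
      rcases key_filter_comparable hc x y with h1 | h1
      · exact ⟨h1, fun h2 => by have := Finset.card_le_card h2; omega⟩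
      · exact absurd (Finset.card_le_card h1) (by omega)
    obtain ⟨g, hg1, hg2⟩ := Finset.exists_of_ssubset hsub
    simp only [Finset.mem_filter, not_and, not_not] at hg1 hg2
    have hgS : g ∈ S := hg1.1
    have hyg : y ∉ g := hg1.2
    have hxg : x ∈ g := hg2 hgS
    have h1 : i < g.card := by
      have := (mem_iff_rk_lt hc hgS x).1 hxg
      omega
    have h2 : g.card ≤ i + 1 := by
      by_contra hcon
      exact hyg ((mem_iff_rk_lt hc hgS y).2 (by omega))
    exact hiT (Finset.mem_image.2 ⟨g, hgS, by omega⟩)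

lemma TS_subset {S : Finset (Finset (Fin n))}
    (hprop : ∀ g ∈ S, g ≠ ∅ ∧ g ≠ Finset.univ) :
    S.image (fun g => g.card - 1) ⊆ Finset.range (n - 1) := by
  intro i hi
  obtain ⟨g, hg, rfl⟩ := Finset.mem_image.1 hi
  obtain ⟨hne, hnu⟩ := hprop g hg
  have h1 : 0 < g.card := Finset.card_pos.2 (Finset.nonempty_of_ne_empty hne)
  have h2 : g.card < n := by
    have h3 : g ⊂ Finset.univ := Finset.ssubset_univ_iff.2 hnu
    have := Finset.card_lt_card h3
    rwa [Finset.card_univ, Fintype.card_fin] at this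
  exact Finset.mem_range.2 (by omega)

lemma image_gset_TS {S : Finset (Finset (Fin n))}
    (hc : IsChain (· ⊆ ·) (S : Set (Finset (Fin n))))
    (hne : ∀ g ∈ S, g ≠ ∅) :
    (S.image (fun g => g.card - 1)).image (gset (permS S)) = S := by
  rw [Finset.image_image]
  have hcongr : ∀ g ∈ S, gset (permS S) (g.card - 1) = g := by
    intro g hg
    have h1 : 0 < g.card := Finset.card_pos.2 (Finset.nonempty_of_ne_empty (hne g hg))
    unfold gset
    conv_rhs => rw [chain_ideal_eq_filter hc hg]
    apply Finset.filter_congr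
    intro z _
    rw [permS_val]
    constructor <;> intro <;> omega
  calc S.image ((gset (permS S)) ∘ (fun g => g.card - 1))
      = S.image id := Finset.image_congr (fun g hg => hcongr g hg)
    _ = S := Finset.image_id

lemma pair_perm_eq {π : Equiv.Perm (Fin n)} {T : Finset ℕ}
    (hT : T ⊆ Finset.range (n - 1))
    (hasc : ∀ i ∈ Finset.range (n - 1), i ∉ T → asc π i) :
    permS (T.image (gset π)) = π := by
  set S := T.image (gset π) with hSdef
  have hc : IsChain (· ⊆ ·) (S : Set (Finset (Fin n))) := gset_chain π T
  have key : ∀ z x : Fin n, hS S z < hS S x → (π z : ℕ) < (π x : ℕ) := by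
    intro z x h
    have hk : keyS S z ≤ keyS S x := key_le_of_hS_lt h
    rcases lt_or_eq_of_le hk with hk | hk
    · have hsub : S.filter (fun g => z ∉ g) ⊂ S.filter (fun g => x ∉ g) := by
        rcases key_filter_comparable hc z x with h1 | h1
        · exact ⟨h1, fun h2 => by have := Finset.card_le_card h2; unfold keyS at hk; omega⟩
        · exact absurd (Finset.card_le_card h1) (by unfold keyS at hk; omega)
      obtain ⟨g, hg1, hg2⟩ := Finset.exists_of_ssubset hsub
      simp only [Finset.mem_filter, not_and, not_not] at hg1 hg2
      have hgS : g ∈ S := hg1.1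
      have hxg : x ∉ g := hg1.2
      have hzg : z ∈ g := hg2 hgS
      obtain ⟨i, hiT, rfl⟩ := Finset.mem_image.1 hgS
      simp only [gset, Finset.mem_filter, Finset.mem_univ, true_and] at hxg hzg
      omega
    · have hzx : (z : ℕ) < (x : ℕ) := by unfold hS at h; rw [hk] at h; omega
      by_contra hpx
      push_neg at hpx
      have hnezx : z ≠ x := fun e => by rw [e] at hzx; omega
      have hne : (π x : ℕ) ≠ (π z : ℕ) := fun e => hnezx (π.injective (Fin.ext e)).symm
      have hlt : (π x : ℕ) < (π z : ℕ) := lt_of_le_of_ne (Fin.le_def.1 hpx) hne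
      have hqn : ((π z : ℕ)) < n := (π z).isLt
      have hnotT : ∀ j, (π x : ℕ) ≤ j → j < (π z : ℕ) → j ∉ T := by
        intro j hpj hjq hjT
        have hgS : gset π j ∈ S := Finset.mem_image_of_mem _ hjT
        have hxg : x ∈ gset π j := by
          simp only [gset, Finset.mem_filter, Finset.mem_univ, true_and]; omega
        have hzg : z ∉ gset π j := by
          simp only [gset, Finset.mem_filter, Finset.mem_univ, true_and]; omega
        have := keyS_lt hc hgS hxg hzg
        omega
      have hascj : ∀ j, (π x : ℕ) ≤ j → j < (π z : ℕ) → asc π j := by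
        intro j h1 h2
        exact hasc j (Finset.mem_range.2 (by omega)) (hnotT j h1 h2)
      have hfin := symm_lt_of_ascents π (π z : ℕ) hqn (π x : ℕ) hlt hascj
      have hx' : π.symm ⟨(π x : ℕ), hlt.trans hqn⟩ = x := by
        have : (⟨(π x : ℕ), hlt.trans hqn⟩ : Fin n) = π x := Fin.ext rfl
        rw [this, Equiv.symm_apply_apply]
      have hz' : π.symm ⟨(π z : ℕ), hqn⟩ = z := by
        have : (⟨(π z : ℕ), hqn⟩ : Fin n) = π z := Fin.ext rfl
        rw [this, Equiv.symm_apply_apply]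
      rw [hx', hz'] at hfin
      have := Fin.lt_def.1 hfin
      omega
  have keyiff : ∀ z x : Fin n, hS S z < hS S x ↔ (π z : ℕ) < (π x : ℕ) := by
    intro z x
    constructor
    · exact key z x
    · intro h
      by_contra h2
      push_neg at h2
      rcases eq_or_lt_of_le h2 with heq | hlt
      · have := hS_inj S heq.symm
        subst this
        omega
      · have := key x z hlt
        omega
  apply Equiv.ext
  intro x
  apply Fin.ext
  rw [permS_val]
  unfold rk
  rw [show (Finset.univ.filter fun z => hS S z < hS S x)
      = (Finset.univ.filter fun z => (π z : ℕ) < (π x : ℕ)) from by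
    apply Finset.filter_congr; intro z _; simp [keyiff]]
  exact card_filter_perm_val_lt π (le_of_lt (π x).isLt)

lemma pair_T_eq {π : Equiv.Perm (Fin n)} {T : Finset ℕ}
    (hT : T ⊆ Finset.range (n - 1)) :
    (T.image (gset π)).image (fun g => g.card - 1) = T := by
  rw [Finset.image_image]
  calc T.image ((fun g : Finset (Fin n) => g.card - 1) ∘ (gset π))
      = T.image id := by
        apply Finset.image_congr
        intro i hi
        have hi' : i < n - 1 := Finset.mem_range.1 (hT hi)
        have hn := Nat.pos_of_ne_zero (NeZero.ne n)
        simp only [Function.comp_apply, id_eq]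
        rw [gset_card (by omega)]
        omega
    _ = T := Finset.image_id
end RiskAux
/-- Linear extensions formula for the risk polynomial.  Let `E` be a poset on
`[n] = Fin n` with order relation `r` compatible with the usual linear order (the
identity is a linear extension).  For each linear extension `π` (an order-preserving
permutation of `Fin n`), with `g^{(i)} = π⁻¹({0, …, i-1})` and
`f(π) = ∏_{ascents i} (f_{g^{(i)}} + 1) · ∏_{descents i} f_{g^{(i)}}`, the risk
polynomial of `J(E)` (the sum over chains of proper nonempty order ideals of the
products of their fitness values) equals `Σ_π f(π)` over all linear extensions `π`. -/
theorem riskPoly_eq_sum_over_linear_extensions (n : ℕ) [NeZero n]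
    (r : Fin n → Fin n → Prop) (hr : IsPartialOrder (Fin n) r)
    (hcompat : ∀ i j : Fin n, r i j → i ≤ j) (f : Finset (Fin n) → ℝ) :
    (∑ S ∈ Finset.univ.filter (fun S : Finset (Finset (Fin n)) =>
        IsChain (· ⊆ ·) (S : Set (Finset (Fin n))) ∧
        ∀ g ∈ S, (∀ i j : Fin n, r i j → j ∈ g → i ∈ g) ∧ g ≠ ∅ ∧ g ≠ Finset.univ),
      ∏ g ∈ S, f g)
    = ∑ π ∈ Finset.univ.filter
          (fun π : Equiv.Perm (Fin n) => ∀ i j : Fin n, r i j → π i ≤ π j),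
        ∏ i ∈ Finset.range (n - 1),
          (if π.symm ((i : ℕ) : Fin n) < π.symm (((i + 1 : ℕ) : ℕ) : Fin n)
           then f (Finset.univ.filter (fun x : Fin n => (π x : ℕ) < i + 1)) + 1
           else f (Finset.univ.filter (fun x : Fin n => (π x : ℕ) < i + 1))) := by
  classical
  set A : Finset (Equiv.Perm (Fin n)) :=
    Finset.univ.filter (fun π : Equiv.Perm (Fin n) => ∀ i j : Fin n, r i j → π i ≤ π j) with hA
  set Chains : Finset (Finset (Finset (Fin n))) :=
    Finset.univ.filter (fun S : Finset (Finset (Fin n)) =>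
        IsChain (· ⊆ ·) (S : Set (Finset (Fin n))) ∧
        ∀ g ∈ S, (∀ i j : Fin n, r i j → j ∈ g → i ∈ g) ∧ g ≠ ∅ ∧ g ≠ Finset.univ) with hChains
  set P : Finset (Equiv.Perm (Fin n) × Finset ℕ) :=
    (A ×ˢ (Finset.range (n - 1)).powerset).filter
      (fun p => ∀ i ∈ Finset.range (n - 1), i ∉ p.2 →
        p.1.symm ((i : ℕ) : Fin n) < p.1.symm (((i + 1 : ℕ) : ℕ) : Fin n)) with hP
  have hstep1 : ∀ π : Equiv.Perm (Fin n),
      (∏ i ∈ Finset.range (n - 1),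
        (if π.symm ((i : ℕ) : Fin n) < π.symm (((i + 1 : ℕ) : ℕ) : Fin n)
         then f (Finset.univ.filter (fun x : Fin n => (π x : ℕ) < i + 1)) + 1
         else f (Finset.univ.filter (fun x : Fin n => (π x : ℕ) < i + 1))))
      = ∑ T ∈ (Finset.range (n - 1)).powerset,
          (if (∀ i ∈ Finset.range (n - 1), i ∉ T →
              π.symm ((i : ℕ) : Fin n) < π.symm (((i + 1 : ℕ) : ℕ) : Fin n))
           then ∏ i ∈ T, f (Finset.univ.filter (fun x : Fin n => (π x : ℕ) < i + 1)) else 0) := by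
    intro π
    have h1 : ∀ i ∈ Finset.range (n - 1),
        (if π.symm ((i : ℕ) : Fin n) < π.symm (((i + 1 : ℕ) : ℕ) : Fin n)
         then f (Finset.univ.filter (fun x : Fin n => (π x : ℕ) < i + 1)) + 1
         else f (Finset.univ.filter (fun x : Fin n => (π x : ℕ) < i + 1)))
        = f (Finset.univ.filter (fun x : Fin n => (π x : ℕ) < i + 1))
          + (if π.symm ((i : ℕ) : Fin n) < π.symm (((i + 1 : ℕ) : ℕ) : Fin n)
             then (1 : ℝ) else 0) := by
      intro i _
      split_ifs <;> ring
    rw [Finset.prod_congr rfl h1, Finset.prod_add]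
    refine Finset.sum_congr rfl fun T hT => ?_
    rw [Finset.prod_boole, mul_ite, mul_one, mul_zero]
    have hcond : (∀ i ∈ Finset.range (n - 1) \ T,
          π.symm ((i : ℕ) : Fin n) < π.symm (((i + 1 : ℕ) : ℕ) : Fin n))
        ↔ (∀ i ∈ Finset.range (n - 1), i ∉ T →
          π.symm ((i : ℕ) : Fin n) < π.symm (((i + 1 : ℕ) : ℕ) : Fin n)) := by
      constructor
      · intro h i hi hiT
        exact h i (Finset.mem_sdiff.2 ⟨hi, hiT⟩)
      · intro h i hi
        exact h i (Finset.mem_sdiff.1 hi).1 (Finset.mem_sdiff.1 hi).2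
    by_cases hco : ∀ i ∈ Finset.range (n - 1), i ∉ T →
        π.symm ((i : ℕ) : Fin n) < π.symm (((i + 1 : ℕ) : ℕ) : Fin n)
    · rw [if_pos (hcond.2 hco), if_pos hco]
    · rw [if_neg (fun h => hco (hcond.1 h)), if_neg hco]
  have h2 : (∑ π ∈ A,
        ∏ i ∈ Finset.range (n - 1),
          (if π.symm ((i : ℕ) : Fin n) < π.symm (((i + 1 : ℕ) : ℕ) : Fin n)
           then f (Finset.univ.filter (fun x : Fin n => (π x : ℕ) < i + 1)) + 1
           else f (Finset.univ.filter (fun x : Fin n => (π x : ℕ) < i + 1))))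
      = ∑ π ∈ A, ∑ T ∈ (Finset.range (n - 1)).powerset,
          (if (∀ i ∈ Finset.range (n - 1), i ∉ T →
              π.symm ((i : ℕ) : Fin n) < π.symm (((i + 1 : ℕ) : ℕ) : Fin n))
           then ∏ i ∈ T, f (Finset.univ.filter (fun x : Fin n => (π x : ℕ) < i + 1)) else 0) :=
    Finset.sum_congr rfl (fun π _ => hstep1 π)
  have h3 : (∑ p ∈ P, ∏ i ∈ p.2,
        f (Finset.univ.filter (fun x : Fin n => (p.1 x : ℕ) < i + 1)))
      = ∑ π ∈ A, ∑ T ∈ (Finset.range (n - 1)).powerset,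
          (if (∀ i ∈ Finset.range (n - 1), i ∉ T →
              π.symm ((i : ℕ) : Fin n) < π.symm (((i + 1 : ℕ) : ℕ) : Fin n))
           then ∏ i ∈ T, f (Finset.univ.filter (fun x : Fin n => (π x : ℕ) < i + 1)) else 0) := by
    rw [hP, Finset.sum_filter, Finset.sum_product]
  have h4 : (∑ p ∈ P, ∏ i ∈ p.2,
        f (Finset.univ.filter (fun x : Fin n => (p.1 x : ℕ) < i + 1)))
      = ∑ S ∈ Chains, ∏ g ∈ S, f g := by
    apply Finset.sum_nbij' (fun p => p.2.image (RiskAux.gset p.1))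
      (fun S => (RiskAux.permS S, S.image (fun g => g.card - 1)))
    · -- hi : maps P into Chains
      rintro ⟨π, T⟩ hp
      simp only [hP, hA, Finset.mem_filter, Finset.mem_product, Finset.mem_powerset,
        Finset.mem_univ, true_and] at hp
      obtain ⟨⟨hlin, hT⟩, hasc⟩ := hp
      simp only [hChains, Finset.mem_filter, Finset.mem_univ, true_and]
      refine ⟨RiskAux.gset_chain π T, ?_⟩
      intro g hg
      obtain ⟨i, hiT, rfl⟩ := Finset.mem_image.1 hg
      have hi : i < n - 1 := Finset.mem_range.1 (hT hiT)
      have hn := Nat.pos_of_ne_zero (NeZero.ne n)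
      exact ⟨RiskAux.gset_ideal r hlin i, RiskAux.gset_ne_empty (by omega),
        RiskAux.gset_ne_univ hi⟩
    · -- hj : maps Chains into P
      intro S hS
      simp only [hChains, Finset.mem_filter, Finset.mem_univ, true_and] at hS
      obtain ⟨hc, hprops⟩ := hS
      simp only [hP, hA, Finset.mem_filter, Finset.mem_product, Finset.mem_powerset,
        Finset.mem_univ, true_and]
      refine ⟨⟨RiskAux.permS_linext r hcompat (fun g hg => (hprops g hg).1), ?_⟩, ?_⟩
      · exact RiskAux.TS_subset (fun g hg => (hprops g hg).2)
      · intro i hi hiT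
        exact RiskAux.chain_asc hc (Finset.mem_range.1 hi) hiT
    · -- j (i p) = p
      rintro ⟨π, T⟩ hp
      simp only [hP, hA, Finset.mem_filter, Finset.mem_product, Finset.mem_powerset,
        Finset.mem_univ, true_and] at hp
      obtain ⟨⟨hlin, hT⟩, hasc⟩ := hp
      have e1 : RiskAux.permS (T.image (RiskAux.gset π)) = π :=
        RiskAux.pair_perm_eq hT hasc
      have e2 : (T.image (RiskAux.gset π)).image (fun g => g.card - 1) = T :=
        RiskAux.pair_T_eq hT
      simp only [e1, e2]
    · -- i (j S) = S
      intro S hS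
      simp only [hChains, Finset.mem_filter, Finset.mem_univ, true_and] at hS
      obtain ⟨hc, hprops⟩ := hS
      exact RiskAux.image_gset_TS hc (fun g hg => (hprops g hg).2.1)
    · -- f p = g (i p)
      rintro ⟨π, T⟩ hp
      simp only [hP, hA, Finset.mem_filter, Finset.mem_product, Finset.mem_powerset,
        Finset.mem_univ, true_and] at hp
      obtain ⟨⟨hlin, hT⟩, hasc⟩ := hp
      have hinj : ∀ i ∈ T, ∀ j ∈ T, RiskAux.gset π i = RiskAux.gset π j → i = j := by
        intro i hi j hj hij
        exact RiskAux.gset_inj (Finset.mem_range.1 (hT hi)) (Finset.mem_range.1 (hT hj)) hij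
      exact (Finset.prod_image hinj).symm
  rw [h2, ← h3, h4]
end

section
/- Corollary of the linear extensions formula in the univariate case: for a poset E on [n] with identity as a linear extension, RP(J(E); a) = Σ_π (1+a)^{n−1−δ(π)} a^{δ(π)}, where the sum is over all linear extensions π of E and δ(π) is the number of descents of π. In particular, the leading coefficient of RP(J(E); a) (the coefficient of a^{n−1}) equals the number of linear extensions of E. -/
open scoped Classical
open Finset
open Fin.NatCast
set_option linter.unusedSectionVars false

section Aux

variable {n : ℕ} [NeZero n]

/-- descent set of a permutation. -/
def desSet (π : Equiv.Perm (Fin n)) : Finset ℕ :=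
  (Finset.range (n - 1)).filter (fun i =>
    π.symm (((i + 1 : ℕ) : ℕ) : Fin n) < π.symm ((i : ℕ) : Fin n))

def isLE (r : Fin n → Fin n → Prop) (π : Equiv.Perm (Fin n)) : Prop :=
  ∀ i j : Fin n, r i j → π i ≤ π j

def adm (r : Fin n → Fin n → Prop) (S : Finset (Finset (Fin n))) : Prop :=
  IsChain (· ⊆ ·) (S : Set (Finset (Fin n))) ∧
    ∀ g ∈ S, (∀ i j : Fin n, r i j → j ∈ g → i ∈ g) ∧ g ≠ ∅ ∧ g ≠ Finset.univ

def pref (π : Equiv.Perm (Fin n)) (t : ℕ) : Finset (Fin n) :=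
  Finset.univ.filter (fun x => (π x : ℕ) ≤ t)

def cnt (S : Finset (Finset (Fin n))) (x : Fin n) : ℕ :=
  (S.filter (fun g => x ∉ g)).card

def key (S : Finset (Finset (Fin n))) (x : Fin n) : ℕ := n * cnt S x + (x : ℕ)

lemma key_inj (S : Finset (Finset (Fin n))) : Function.Injective (key S) := by
  intro x y h
  have hx : key S x % n = (x : ℕ) := by
    unfold key; rw [Nat.mul_add_mod, Nat.mod_eq_of_lt x.isLt]
  have hy : key S y % n = (y : ℕ) := by
    unfold key; rw [Nat.mul_add_mod, Nat.mod_eq_of_lt y.isLt]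
  apply Fin.ext
  rw [← hx, ← hy, h]

lemma key_lt_iff (S : Finset (Finset (Fin n))) (x y : Fin n) :
    key S x < key S y ↔ (cnt S x < cnt S y ∨ (cnt S x = cnt S y ∧ x < y)) := by
  have hx := x.isLt
  have hy := y.isLt
  unfold key
  constructor
  · intro h
    rcases lt_trichotomy (cnt S x) (cnt S y) with hc | hc | hc
    · exact Or.inl hc
    · refine Or.inr ⟨hc, ?_⟩
      rw [Fin.lt_def]
      rw [hc] at h
      omega
    · exfalso
      have h1 : n * cnt S y + n ≤ n * cnt S x := by
        calc n * cnt S y + n = n * (cnt S y + 1) := by ring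
        _ ≤ n * cnt S x := Nat.mul_le_mul_left n hc
      omega
  · rintro (hc | ⟨hc, hxy⟩)
    · have h1 : n * cnt S x + n ≤ n * cnt S y := by
        calc n * cnt S x + n = n * (cnt S x + 1) := by ring
        _ ≤ n * cnt S y := Nat.mul_le_mul_left n hc
      omega
    · rw [hc]
      rw [Fin.lt_def] at hxy
      omega

noncomputable def rk (S : Finset (Finset (Fin n))) (x : Fin n) : Fin n :=
  ⟨(Finset.univ.filter (fun y => key S y < key S x)).card, by
    have hsub : (Finset.univ.filter (fun y => key S y < key S x)) ⊆ Finset.univ.erase x := by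
      intro y hy
      rw [Finset.mem_filter] at hy
      exact Finset.mem_erase.mpr ⟨by rintro rfl; exact lt_irrefl _ hy.2, Finset.mem_univ y⟩
    have h1 := Finset.card_le_card hsub
    have h2 : (Finset.univ.erase x).card = n - 1 := by
      rw [Finset.card_erase_of_mem (Finset.mem_univ x), Finset.card_univ, Fintype.card_fin]
    have hn : 0 < n := Nat.pos_of_ne_zero (NeZero.ne n)
    omega⟩

lemma rk_val (S : Finset (Finset (Fin n))) (x : Fin n) :
    (rk S x : ℕ) = (Finset.univ.filter (fun y => key S y < key S x)).card := rfl

lemma rk_lt_of_key_lt (S : Finset (Finset (Fin n))) {x y : Fin n}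
    (h : key S x < key S y) : rk S x < rk S y := by
  rw [Fin.lt_def, rk_val, rk_val]
  apply Finset.card_lt_card
  constructor
  · intro z hz
    rw [Finset.mem_filter] at hz ⊢
    exact ⟨hz.1, lt_trans hz.2 h⟩
  · intro hsub
    have hx : x ∈ Finset.univ.filter (fun y' => key S y' < key S y) := by
      rw [Finset.mem_filter]; exact ⟨Finset.mem_univ x, h⟩
    have := hsub hx
    rw [Finset.mem_filter] at this
    exact lt_irrefl _ this.2

lemma rk_lt_iff (S : Finset (Finset (Fin n))) (x y : Fin n) :
    rk S x < rk S y ↔ key S x < key S y := by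
  constructor
  · intro h
    rcases lt_trichotomy (key S x) (key S y) with hk | hk | hk
    · exact hk
    · exact absurd h (by rw [key_inj S hk]; exact lt_irrefl _)
    · exact absurd (rk_lt_of_key_lt S hk) (asymm h)
  · exact rk_lt_of_key_lt S

lemma rk_inj (S : Finset (Finset (Fin n))) : Function.Injective (rk S) := by
  intro x y h
  rcases lt_trichotomy (key S x) (key S y) with hk | hk | hk
  · exact absurd (rk_lt_of_key_lt S hk) (by rw [h]; exact lt_irrefl _)
  · exact key_inj S hk
  · exact absurd (rk_lt_of_key_lt S hk) (by rw [h]; exact lt_irrefl _)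

noncomputable def permOf (S : Finset (Finset (Fin n))) : Equiv.Perm (Fin n) :=
  Equiv.ofBijective (rk S) (Finite.injective_iff_bijective.mp (rk_inj S))

lemma permOf_apply (S : Finset (Finset (Fin n))) (x : Fin n) : permOf S x = rk S x := rfl

lemma cntFilter_comparable {S : Finset (Finset (Fin n))}
    (hch : IsChain (· ⊆ ·) (S : Set (Finset (Fin n)))) (x y : Fin n) :
    S.filter (fun g => x ∉ g) ⊆ S.filter (fun g => y ∉ g) ∨
    S.filter (fun g => y ∉ g) ⊆ S.filter (fun g => x ∉ g) := by
  by_contra hcon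
  push_neg at hcon
  obtain ⟨h1, h2⟩ := hcon
  obtain ⟨gx, hgx, hgx2⟩ := Finset.not_subset.mp h1
  obtain ⟨gy, hgy, hgy2⟩ := Finset.not_subset.mp h2
  rw [Finset.mem_filter] at hgx hgy
  have hxgy : x ∈ gy := by
    by_contra hx
    exact hgy2 (Finset.mem_filter.mpr ⟨hgy.1, hx⟩)
  have hygx : y ∈ gx := by
    by_contra hy
    exact hgx2 (Finset.mem_filter.mpr ⟨hgx.1, hy⟩)
  have hne : gx ≠ gy := by
    rintro rfl; exact hgx.2 hxgy
  rcases hch (Finset.mem_coe.mpr hgx.1) (Finset.mem_coe.mpr hgy.1) hne with hs | hs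
  · exact hgy.2 (hs hygx)
  · exact hgx.2 (hs hxgy)

lemma cnt_mono_subset {S : Finset (Finset (Fin n))}
    (hch : IsChain (· ⊆ ·) (S : Set (Finset (Fin n)))) {x y : Fin n}
    (h : cnt S x ≤ cnt S y) :
    S.filter (fun g => x ∉ g) ⊆ S.filter (fun g => y ∉ g) := by
  rcases cntFilter_comparable hch x y with h1 | h1
  · exact h1
  · exact fun z hz => (Finset.eq_of_subset_of_card_le h1 h).symm ▸ hz

lemma mem_iff_rk_lt {S : Finset (Finset (Fin n))}
    (hch : IsChain (· ⊆ ·) (S : Set (Finset (Fin n)))) {g : Finset (Fin n)}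
    (hg : g ∈ S) (x : Fin n) :
    x ∈ g ↔ (rk S x : ℕ) < g.card := by
  constructor
  · intro hx
    have hsub : (Finset.univ.filter (fun y => key S y ≤ key S x)) ⊆ g := by
      intro y hy
      rw [Finset.mem_filter] at hy
      have hcy : cnt S y ≤ cnt S x := by
        by_contra hlt
        push_neg at hlt
        exact absurd ((key_lt_iff S x y).mpr (Or.inl hlt)) (not_lt.mpr hy.2)
      have h2 := cnt_mono_subset hch hcy
      by_contra hyg
      have hmem : g ∈ S.filter (fun g' => y ∉ g') := Finset.mem_filter.mpr ⟨hg, hyg⟩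
      exact (Finset.mem_filter.mp (h2 hmem)).2 hx
    have hins : (Finset.univ.filter (fun y => key S y ≤ key S x)) =
        insert x (Finset.univ.filter (fun y => key S y < key S x)) := by
      ext y
      simp only [Finset.mem_filter, Finset.mem_insert, Finset.mem_univ, true_and]
      constructor
      · intro h
        rcases lt_or_eq_of_le h with h | h
        · exact Or.inr h
        · exact Or.inl (key_inj S h)
      · rintro (rfl | h)
        · exact le_refl _
        · exact le_of_lt h
    have hcard := Finset.card_le_card hsub
    rw [hins, Finset.card_insert_of_notMem (by simp)] at hcard
    rw [rk_val]
    omega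
  · intro hlt
    by_contra hx
    have hsub : g ⊆ Finset.univ.filter (fun y => key S y < key S x) := by
      intro y hy
      rw [Finset.mem_filter]
      refine ⟨Finset.mem_univ y, ?_⟩
      have h1 : ¬ (S.filter (fun g' => x ∉ g') ⊆ S.filter (fun g' => y ∉ g')) := by
        intro hs
        exact (Finset.mem_filter.mp (hs (Finset.mem_filter.mpr ⟨hg, hx⟩))).2 hy
      have h2 : S.filter (fun g' => y ∉ g') ⊆ S.filter (fun g' => x ∉ g') :=
        (cntFilter_comparable hch y x).resolve_right h1
      have h3 : cnt S y < cnt S x := Finset.card_lt_card ⟨h2, h1⟩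
      exact (key_lt_iff S y x).mpr (Or.inl h3)
    have := Finset.card_le_card hsub
    rw [rk_val] at hlt
    omega

end Aux

section Aux2

variable {n : ℕ} [NeZero n]

lemma card_filter_le (t : ℕ) (ht : t < n) :
    (Finset.univ.filter (fun v : Fin n => (v : ℕ) ≤ t)).card = t + 1 := by
  have h : ∀ m ∈ Finset.range (t + 1), m < n := fun m hm =>
    lt_of_lt_of_le (Finset.mem_range.mp hm) ht
  rw [show (Finset.univ.filter (fun v : Fin n => (v : ℕ) ≤ t)) =
      (Finset.range (t + 1)).attachFin h by
    ext v
    simp [Finset.mem_attachFin, Finset.mem_range, Nat.lt_succ_iff]]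
  rw [Finset.card_attachFin, Finset.card_range]

lemma card_filter_lt (w : Fin n) :
    (Finset.univ.filter (fun v : Fin n => v < w)).card = (w : ℕ) := by
  have h : ∀ m ∈ Finset.range (w : ℕ), m < n := fun m hm =>
    lt_trans (Finset.mem_range.mp hm) w.isLt
  rw [show (Finset.univ.filter (fun v : Fin n => v < w)) =
      (Finset.range (w : ℕ)).attachFin h by
    ext v
    simp only [Finset.mem_attachFin, Finset.mem_range, Finset.mem_filter,
      Finset.mem_univ, true_and, Fin.lt_def]]
  rw [Finset.card_attachFin, Finset.card_range]

lemma pref_card (π : Equiv.Perm (Fin n)) {t : ℕ} (ht : t < n) :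
    (pref π t).card = t + 1 := by
  have himg : pref π t =
      Finset.image π.symm (Finset.univ.filter (fun v : Fin n => (v : ℕ) ≤ t)) := by
    ext x
    simp only [pref, Finset.mem_filter, Finset.mem_univ, true_and, Finset.mem_image]
    constructor
    · intro h
      exact ⟨π x, by simpa using h, by simp⟩
    · rintro ⟨v, hv, rfl⟩
      simpa using hv
  rw [himg, Finset.card_image_of_injective _ π.symm.injective, card_filter_le t ht]

lemma pref_mono (π : Equiv.Perm (Fin n)) {s t : ℕ} (h : s ≤ t) :
    pref π s ⊆ pref π t := by
  intro x hx
  rw [pref, Finset.mem_filter] at hx ⊢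
  exact ⟨hx.1, le_trans hx.2 h⟩

lemma pref_good {r : Fin n → Fin n → Prop} {π : Equiv.Perm (Fin n)}
    (hLE : isLE r π) {t : ℕ} (ht : t < n - 1) :
    (∀ i j : Fin n, r i j → j ∈ pref π t → i ∈ pref π t) ∧
      pref π t ≠ ∅ ∧ pref π t ≠ Finset.univ := by
  have hn : 0 < n := Nat.pos_of_ne_zero (NeZero.ne n)
  refine ⟨?_, ?_, ?_⟩
  · intro i j hij hj
    rw [pref, Finset.mem_filter] at hj ⊢
    refine ⟨Finset.mem_univ i, le_trans ?_ hj.2⟩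
    exact_mod_cast Fin.le_def.mp (hLE i j hij)
  · apply Finset.nonempty_iff_ne_empty.mp
    refine ⟨π.symm 0, ?_⟩
    rw [pref, Finset.mem_filter]
    refine ⟨Finset.mem_univ _, ?_⟩
    simp
  · intro hu
    have hz : π.symm ⟨n - 1, by omega⟩ ∈ pref π t := by rw [hu]; exact Finset.mem_univ _
    rw [pref, Finset.mem_filter, Equiv.apply_symm_apply] at hz
    have := hz.2
    simp only [Fin.val_mk] at this
    omega

lemma pref_eq {S : Finset (Finset (Fin n))}
    (hch : IsChain (· ⊆ ·) (S : Set (Finset (Fin n)))) {g : Finset (Fin n)}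
    (hg : g ∈ S) (hne : g ≠ ∅) :
    pref (permOf S) (g.card - 1) = g := by
  have h1 : 0 < g.card := Finset.card_pos.mpr (Finset.nonempty_iff_ne_empty.mpr hne)
  ext x
  rw [pref, Finset.mem_filter, mem_iff_rk_lt hch hg x, permOf_apply]
  constructor
  · rintro ⟨-, h⟩
    omega
  · intro h
    exact ⟨Finset.mem_univ x, by omega⟩

end Aux2

section Aux3

variable {n : ℕ} [NeZero n]

lemma rk_le_of_key_le (S : Finset (Finset (Fin n))) {x y : Fin n}
    (h : key S x ≤ key S y) : rk S x ≤ rk S y := by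
  rcases lt_or_eq_of_le h with h | h
  · exact le_of_lt (rk_lt_of_key_lt S h)
  · rw [key_inj S h]

lemma permOf_isLE {r : Fin n → Fin n → Prop}
    (hcompat : ∀ i j : Fin n, r i j → i ≤ j)
    {S : Finset (Finset (Fin n))} (hS : adm r S) : isLE r (permOf S) := by
  intro i j hij
  rw [permOf_apply, permOf_apply]
  apply rk_le_of_key_le
  have hcnt : cnt S i ≤ cnt S j := by
    apply Finset.card_le_card
    intro g hgf
    rw [Finset.mem_filter] at hgf ⊢
    exact ⟨hgf.1, fun hj => hgf.2 ((hS.2 _ hgf.1).1 i j hij hj)⟩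
  have hv : (i : ℕ) ≤ (j : ℕ) := Fin.le_def.mp (hcompat i j hij)
  rcases lt_or_eq_of_le hcnt with h | h
  · have h1 : n * cnt S i + n ≤ n * cnt S j := by
      calc n * cnt S i + n = n * (cnt S i + 1) := by ring
      _ ≤ n * cnt S j := Nat.mul_le_mul_left n h
    have := i.isLt
    unfold key
    omega
  · unfold key
    rw [h]
    omega

/-- No g with the given cardinality means descent positions must be cuts. -/
lemma des_subset_image {r : Fin n → Fin n → Prop}
    {S : Finset (Finset (Fin n))} (hS : adm r S) :
    desSet (permOf S) ⊆ S.image (fun g => g.card - 1) := by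
  intro p hp
  rw [desSet, Finset.mem_filter, Finset.mem_range] at hp
  obtain ⟨hp1, hp2⟩ := hp
  have hn : 0 < n := Nat.pos_of_ne_zero (NeZero.ne n)
  have hpn : p < n := by omega
  have hp1n : p + 1 < n := by omega
  by_contra hpnot
  have hcard : ∀ g ∈ S, g.card ≠ p + 1 := by
    intro g hg hc
    exact hpnot (Finset.mem_image.mpr ⟨g, hg, by omega⟩)
  set π := permOf S with hπ
  set x := π.symm ((p : ℕ) : Fin n) with hx
  set y := π.symm (((p + 1 : ℕ) : ℕ) : Fin n) with hy
  have hπx : (rk S x : ℕ) = p := by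
    have : π x = ((p : ℕ) : Fin n) := Equiv.apply_symm_apply π _
    rw [permOf_apply] at this
    rw [this, Fin.val_cast_of_lt hpn]
  have hπy : (rk S y : ℕ) = p + 1 := by
    have : π y = (((p + 1 : ℕ) : ℕ) : Fin n) := Equiv.apply_symm_apply π _
    rw [permOf_apply] at this
    rw [this, Fin.val_cast_of_lt hp1n]
  have hcnteq : cnt S x = cnt S y := by
    unfold cnt
    congr 1
    apply Finset.filter_congr
    intro g hg
    have hgc : 0 < g.card := Finset.card_pos.mpr
      (Finset.nonempty_iff_ne_empty.mpr (hS.2 g hg).2.1)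
    have hgne := hcard g hg
    have hxg := mem_iff_rk_lt hS.1 hg x
    have hyg := mem_iff_rk_lt hS.1 hg y
    rw [hπx] at hxg
    rw [hπy] at hyg
    constructor
    · intro hxn
      rw [hyg]
      intro hyc
      exact hxn (hxg.mpr (by omega))
    · intro hyn
      rw [hxg]
      intro hxc
      exact hyn (hyg.mpr (by omega))
  have hkey : key S y < key S x := by
    rw [key_lt_iff]
    exact Or.inr ⟨hcnteq.symm, hp2⟩
  have := rk_lt_of_key_lt S hkey
  rw [Fin.lt_def, hπx, hπy] at this
  omega

end Aux3

section Aux4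

variable {n : ℕ} [NeZero n]

lemma run_le (π : Equiv.Perm (Fin n)) (p : ℕ) :
    ∀ d : ℕ, p + d < n →
    (∀ i, p ≤ i → i < p + d →
      (π.symm ((i : ℕ) : Fin n) : ℕ) < (π.symm (((i + 1 : ℕ) : ℕ) : Fin n) : ℕ)) →
    (π.symm ((p : ℕ) : Fin n) : ℕ) ≤ (π.symm (((p + d : ℕ) : ℕ) : Fin n) : ℕ) := by
  intro d
  induction d with
  | zero => intro _ _; exact le_refl _
  | succ d ih =>
    intro hlt h
    have h1 := ih (by omega) (fun i hi1 hi2 => h i hi1 (by omega))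
    have h2 := h (p + d) (by omega) (by omega)
    have he : p + (d + 1) = (p + d) + 1 := rfl
    rw [he]
    omega

lemma run_lt (π : Equiv.Perm (Fin n)) {p q : ℕ} (hq : q < n) (hpq : p < q)
    (h : ∀ i, p ≤ i → i < q →
      (π.symm ((i : ℕ) : Fin n) : ℕ) < (π.symm (((i + 1 : ℕ) : ℕ) : Fin n) : ℕ)) :
    (π.symm ((p : ℕ) : Fin n) : ℕ) < (π.symm ((q : ℕ) : Fin n) : ℕ) := by
  obtain ⟨d, rfl⟩ : ∃ d, q = p + d + 1 := ⟨q - p - 1, by omega⟩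
  have h1 := run_le π p d (by omega) (fun i hi1 hi2 => h i hi1 (by omega))
  have h2 := h (p + d) (by omega) (by omega)
  omega

lemma nondes {π : Equiv.Perm (Fin n)} {i : ℕ} (hi : i < n - 1) (hnd : i ∉ desSet π) :
    (π.symm ((i : ℕ) : Fin n) : ℕ) < (π.symm (((i + 1 : ℕ) : ℕ) : Fin n) : ℕ) := by
  rw [desSet, Finset.mem_filter] at hnd
  push_neg at hnd
  have h := hnd (Finset.mem_range.mpr hi)
  have hne : π.symm ((i : ℕ) : Fin n) ≠ π.symm (((i + 1 : ℕ) : ℕ) : Fin n) := by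
    intro he
    have h2 := π.symm.injective he
    have hv := congrArg Fin.val h2
    rw [Fin.val_cast_of_lt (by omega), Fin.val_cast_of_lt (by omega)] at hv
    omega
  exact Fin.lt_def.mp (lt_of_le_of_ne h hne)

lemma pref_injOn (π : Equiv.Perm (Fin n)) {T : Finset ℕ} (hT : T ⊆ Finset.range (n - 1)) :
    Set.InjOn (pref π) T := by
  intro t1 h1 t2 h2 he
  have hn : 0 < n := Nat.pos_of_ne_zero (NeZero.ne n)
  have ht1 : t1 < n := by have := Finset.mem_range.mp (hT h1); omega
  have ht2 : t2 < n := by have := Finset.mem_range.mp (hT h2); omega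
  have := congrArg Finset.card he
  rw [pref_card π ht1, pref_card π ht2] at this
  omega

lemma cnt_image (π : Equiv.Perm (Fin n)) {T : Finset ℕ}
    (hT : T ⊆ Finset.range (n - 1)) (x : Fin n) :
    cnt (T.image (pref π)) x = (T.filter (fun t => t < (π x : ℕ))).card := by
  unfold cnt
  rw [Finset.filter_image]
  rw [Finset.card_image_of_injOn (Set.InjOn.mono (fun t ht =>
    Finset.mem_coe.mpr (Finset.mem_filter.mp (Finset.mem_coe.mp ht)).1) (pref_injOn π hT))]
  congr 1
  apply Finset.filter_congr
  intro t ht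
  simp only [Function.comp_apply, pref, Finset.mem_filter, Finset.mem_univ, true_and]
  exact not_le

lemma key_image_lt_iff {π : Equiv.Perm (Fin n)} {T : Finset ℕ}
    (hT : T ⊆ Finset.range (n - 1)) (hdes : desSet π ⊆ T) (x y : Fin n) :
    key (T.image (pref π)) x < key (T.image (pref π)) y ↔ π x < π y := by
  set S := T.image (pref π) with hSdef
  have claim : ∀ x y : Fin n, π x < π y → cnt S x = cnt S y → x < y := by
    intro x y hπ hc
    have hπv : (π x : ℕ) < (π y : ℕ) := Fin.lt_def.mp hπ
    rw [hSdef, cnt_image π hT, cnt_image π hT] at hc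
    have hsub : T.filter (fun t => t < (π x : ℕ)) ⊆ T.filter (fun t => t < (π y : ℕ)) := by
      intro t ht
      rw [Finset.mem_filter] at ht ⊢
      exact ⟨ht.1, lt_trans ht.2 hπv⟩
    have heq := Finset.eq_of_subset_of_card_le hsub (le_of_eq hc.symm)
    have hnocut : ∀ i, (π x : ℕ) ≤ i → i < (π y : ℕ) → i ∉ T := by
      intro i h1 h2 hiT
      have hm : i ∈ T.filter (fun t => t < (π y : ℕ)) := Finset.mem_filter.mpr ⟨hiT, h2⟩
      rw [← heq, Finset.mem_filter] at hm
      omega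
    have hstep : ∀ i, (π x : ℕ) ≤ i → i < (π y : ℕ) →
        (π.symm ((i : ℕ) : Fin n) : ℕ) < (π.symm (((i + 1 : ℕ) : ℕ) : Fin n) : ℕ) := by
      intro i h1 h2
      have hin : i < n - 1 := by
        have := (π y).isLt
        omega
      exact nondes hin (fun hd => hnocut i h1 h2 (hdes hd))
    have hrun := run_lt π (π y).isLt hπv hstep
    rw [Fin.cast_val_eq_self, Fin.cast_val_eq_self, Equiv.symm_apply_apply,
      Equiv.symm_apply_apply] at hrun
    exact Fin.lt_def.mpr hrun
  have hmono : ∀ x y : Fin n, π x < π y → cnt S x ≤ cnt S y := by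
    intro x y h
    rw [hSdef, cnt_image π hT, cnt_image π hT]
    apply Finset.card_le_card
    intro t ht
    rw [Finset.mem_filter] at ht ⊢
    exact ⟨ht.1, lt_trans ht.2 (Fin.lt_def.mp h)⟩
  constructor
  · intro h
    rcases (key_lt_iff S x y).mp h with hc | ⟨hc, hxy⟩
    · rcases lt_trichotomy (π x) (π y) with h1 | h1 | h1
      · exact h1
      · exact absurd (π.injective h1) (by rintro rfl; exact lt_irrefl _ hc)
      · exact absurd (hmono y x h1) (not_le.mpr hc)
    · rcases lt_trichotomy (π x) (π y) with h1 | h1 | h1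
      · exact h1
      · exact absurd (π.injective h1) (ne_of_lt hxy)
      · exact absurd (claim y x h1 hc.symm) (asymm hxy)
  · intro h
    rw [key_lt_iff]
    rcases lt_or_eq_of_le (hmono x y h) with h1 | h1
    · exact Or.inl h1
    · exact Or.inr ⟨h1, claim x y h h1⟩

lemma permOf_image {π : Equiv.Perm (Fin n)} {T : Finset ℕ}
    (hT : T ⊆ Finset.range (n - 1)) (hdes : desSet π ⊆ T) :
    permOf (T.image (pref π)) = π := by
  set S := T.image (pref π) with hSdef
  apply Equiv.ext
  intro x
  rw [permOf_apply]
  apply Fin.ext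
  rw [rk_val]
  have h1 : Finset.univ.filter (fun y => key S y < key S x) =
      Finset.univ.filter (fun y => π y < π x) := by
    apply Finset.filter_congr
    intro y _
    exact key_image_lt_iff hT hdes y x
  rw [h1]
  have himg : Finset.univ.filter (fun y => π y < π x) =
      Finset.image π.symm (Finset.univ.filter (fun v : Fin n => v < π x)) := by
    ext y
    simp only [Finset.mem_filter, Finset.mem_univ, true_and, Finset.mem_image]
    constructor
    · intro h
      exact ⟨π y, h, by simp⟩
    · rintro ⟨v, hv, rfl⟩
      simpa using hv
  rw [himg, Finset.card_image_of_injective _ π.symm.injective, card_filter_lt]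

lemma image_card_pref (π : Equiv.Perm (Fin n)) {T : Finset ℕ}
    (hT : T ⊆ Finset.range (n - 1)) :
    (T.image (pref π)).image (fun g => g.card - 1) = T := by
  rw [Finset.image_image]
  have h : ∀ t ∈ T, ((fun g : Finset (Fin n) => g.card - 1) ∘ pref π) t = id t := by
    intro t ht
    have hn : 0 < n := Nat.pos_of_ne_zero (NeZero.ne n)
    have htn : t < n := by have := Finset.mem_range.mp (hT ht); omega
    simp only [Function.comp_apply, pref_card π htn, id]
    omega
  rw [Finset.image_congr h]
  exact Finset.image_id

lemma image_pref_permOf {r : Fin n → Fin n → Prop} {S : Finset (Finset (Fin n))}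
    (hS : adm r S) :
    (S.image (fun g => g.card - 1)).image (pref (permOf S)) = S := by
  rw [Finset.image_image]
  have h : ∀ g ∈ S, (pref (permOf S) ∘ (fun g : Finset (Fin n) => g.card - 1)) g = id g :=
    fun g hg => pref_eq hS.1 hg (hS.2 g hg).2.1
  rw [Finset.image_congr h]
  exact Finset.image_id

lemma card_image_sub_one {r : Fin n → Fin n → Prop} {S : Finset (Finset (Fin n))}
    (hS : adm r S) :
    (S.image (fun g => g.card - 1)).card = S.card := by
  apply Finset.card_image_of_injOn
  intro g1 h1 g2 h2 he
  by_contra hne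
  have hc1 : 0 < g1.card := Finset.card_pos.mpr
    (Finset.nonempty_iff_ne_empty.mpr (hS.2 g1 (Finset.mem_coe.mp h1)).2.1)
  have hc2 : 0 < g2.card := Finset.card_pos.mpr
    (Finset.nonempty_iff_ne_empty.mpr (hS.2 g2 (Finset.mem_coe.mp h2)).2.1)
  have he' : g1.card - 1 = g2.card - 1 := he
  have hcc : g1.card = g2.card := by omega
  rcases hS.1 h1 h2 hne with hs | hs
  · exact hne (Finset.eq_of_subset_of_card_le hs (le_of_eq hcc.symm))
  · exact hne (Finset.eq_of_subset_of_card_le hs (le_of_eq hcc)).symm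

lemma image_sub_one_subset {r : Fin n → Fin n → Prop} {S : Finset (Finset (Fin n))}
    (hS : adm r S) :
    S.image (fun g => g.card - 1) ⊆ Finset.range (n - 1) := by
  intro t ht
  rw [Finset.mem_image] at ht
  obtain ⟨g, hg, rfl⟩ := ht
  have h1 : 0 < g.card := Finset.card_pos.mpr
    (Finset.nonempty_iff_ne_empty.mpr (hS.2 g hg).2.1)
  have h2 : g.card < n := by
    have := (Finset.card_lt_iff_ne_univ g).mpr (hS.2 g hg).2.2
    simpa using this
  rw [Finset.mem_range]
  omega

lemma image_pref_adm {r : Fin n → Fin n → Prop} {π : Equiv.Perm (Fin n)}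
    (hLE : isLE r π) {T : Finset ℕ} (hT : T ⊆ Finset.range (n - 1)) :
    adm r (T.image (pref π)) := by
  constructor
  · intro g1 hg1 g2 hg2 hne
    rw [Finset.mem_coe, Finset.mem_image] at hg1 hg2
    obtain ⟨t1, ht1, rfl⟩ := hg1
    obtain ⟨t2, ht2, rfl⟩ := hg2
    rcases le_total t1 t2 with h | h
    · exact Or.inl (pref_mono π h)
    · exact Or.inr (pref_mono π h)
  · intro g hg
    rw [Finset.mem_image] at hg
    obtain ⟨t, ht, rfl⟩ := hg
    exact pref_good hLE (Finset.mem_range.mp (hT ht))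

end Aux4

section Aux5

lemma sum_powerset_pow (V : Finset ℕ) (a : ℝ) :
    ∑ U ∈ V.powerset, a ^ U.card = (1 + a) ^ V.card := by
  have h := Finset.prod_add (fun _ : ℕ => a) (fun _ : ℕ => (1 : ℝ)) V
  simp only [Finset.prod_const, Finset.prod_const_one, mul_one, one_pow] at h
  rw [add_comm 1 a]
  exact h.symm

lemma innerSumPow (D : Finset ℕ) (m : ℕ) (hD : D ⊆ Finset.range m) (a : ℝ) :
    ∑ T ∈ (Finset.range m).powerset.filter (fun T => D ⊆ T), a ^ T.card
      = (1 + a) ^ (m - D.card) * a ^ D.card := by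
  have h1 : ∑ T ∈ (Finset.range m).powerset.filter (fun T => D ⊆ T), a ^ T.card
      = ∑ U ∈ ((Finset.range m) \ D).powerset, a ^ (U.card + D.card) := by
    refine Finset.sum_bij' (fun T _ => T \ D) (fun U _ => U ∪ D) ?_ ?_ ?_ ?_ ?_
    · intro T hT
      rw [Finset.mem_filter, Finset.mem_powerset] at hT
      rw [Finset.mem_powerset]
      exact Finset.sdiff_subset_sdiff hT.1 (Finset.Subset.refl D)
    · intro U hU
      rw [Finset.mem_powerset] at hU
      rw [Finset.mem_filter, Finset.mem_powerset]
      refine ⟨Finset.union_subset (hU.trans (Finset.sdiff_subset)) hD, Finset.subset_union_right⟩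
    · intro T hT
      rw [Finset.mem_filter] at hT
      exact Finset.sdiff_union_of_subset hT.2
    · intro U hU
      rw [Finset.mem_powerset] at hU
      have hdisj : Disjoint U D := Finset.disjoint_left.mpr
        (fun x hxU hxD => (Finset.mem_sdiff.mp (hU hxU)).2 hxD)
      show (U ∪ D) \ D = U
      rw [Finset.union_sdiff_distrib, Finset.sdiff_self, Finset.union_empty]
      exact Finset.sdiff_eq_self_iff_disjoint.mpr hdisj
    · intro T hT
      rw [Finset.mem_filter] at hT
      rw [Finset.card_sdiff_add_card_eq_card hT.2]
  rw [h1]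
  have h2 : ∀ U : Finset ℕ, a ^ (U.card + D.card) = a ^ U.card * a ^ D.card :=
    fun U => pow_add a U.card D.card
  rw [Finset.sum_congr rfl (fun U _ => h2 U), ← Finset.sum_mul, sum_powerset_pow,
    Finset.card_sdiff_of_subset hD, Finset.card_range]

end Aux5

/-- Univariate corollary of the linear extensions formula: for a poset on `Fin n`
(with order relation `r` having the identity as a linear extension),
`RP(J(E); a) = Σ_π (1+a)^(n-1-δ(π)) a^(δ(π))` over all linear extensions `π`, where
`δ(π)` is the number of descents of `π`; and the coefficient of `a^(n-1)` in the risk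
polynomial (the number of `(n-1)`-element chains of `G' = J(E) ∖ {0̂, 1̂}`) equals the
number of linear extensions of `E`. -/
theorem riskPoly_univariate_linear_extensions (n : ℕ) [NeZero n]
    (r : Fin n → Fin n → Prop) (hr : IsPartialOrder (Fin n) r)
    (hcompat : ∀ i j : Fin n, r i j → i ≤ j) (a : ℝ) :
    (∑ S ∈ Finset.univ.filter (fun S : Finset (Finset (Fin n)) =>
        IsChain (· ⊆ ·) (S : Set (Finset (Fin n))) ∧
        ∀ g ∈ S, (∀ i j : Fin n, r i j → j ∈ g → i ∈ g) ∧ g ≠ ∅ ∧ g ≠ Finset.univ),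
      a ^ S.card)
    = (∑ π ∈ Finset.univ.filter
          (fun π : Equiv.Perm (Fin n) => ∀ i j : Fin n, r i j → π i ≤ π j),
        (1 + a) ^ (n - 1 -
            ((Finset.range (n - 1)).filter (fun i =>
              π.symm (((i + 1 : ℕ) : ℕ) : Fin n) < π.symm ((i : ℕ) : Fin n))).card)
          * a ^ ((Finset.range (n - 1)).filter (fun i =>
              π.symm (((i + 1 : ℕ) : ℕ) : Fin n) < π.symm ((i : ℕ) : Fin n))).card)
    ∧ ((Finset.univ.filter (fun S : Finset (Finset (Fin n)) =>
          (IsChain (· ⊆ ·) (S : Set (Finset (Fin n))) ∧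
            ∀ g ∈ S, (∀ i j : Fin n, r i j → j ∈ g → i ∈ g) ∧
              g ≠ ∅ ∧ g ≠ Finset.univ) ∧ S.card = n - 1)).card
        = (Finset.univ.filter
            (fun π : Equiv.Perm (Fin n) => ∀ i j : Fin n, r i j → π i ≤ π j)).card) := by
  have hn : 0 < n := Nat.pos_of_ne_zero (NeZero.ne n)
  constructor
  · -- the sum identity
    have hbij : (∑ S ∈ Finset.univ.filter (fun S : Finset (Finset (Fin n)) =>
        IsChain (· ⊆ ·) (S : Set (Finset (Fin n))) ∧
        ∀ g ∈ S, (∀ i j : Fin n, r i j → j ∈ g → i ∈ g) ∧ g ≠ ∅ ∧ g ≠ Finset.univ),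
          a ^ S.card)
        = ∑ p ∈ ((Finset.univ : Finset (Equiv.Perm (Fin n))) ×ˢ
            (Finset.range (n - 1)).powerset).filter
              (fun p => isLE r p.1 ∧ desSet p.1 ⊆ p.2), a ^ p.2.card := by
      refine Finset.sum_bij' (fun S _ => (permOf S, S.image (fun g => g.card - 1)))
        (fun p _ => p.2.image (pref p.1)) ?_ ?_ ?_ ?_ ?_
      · intro S hS
        have hadm : adm r S := (Finset.mem_filter.mp hS).2
        rw [Finset.mem_filter, Finset.mem_product]
        exact ⟨⟨Finset.mem_univ _, Finset.mem_powerset.mpr (image_sub_one_subset hadm)⟩,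
          permOf_isLE hcompat hadm, des_subset_image hadm⟩
      · rintro ⟨π, T⟩ hp
        rw [Finset.mem_filter, Finset.mem_product] at hp
        obtain ⟨⟨-, hT⟩, hLE, -⟩ := hp
        rw [Finset.mem_powerset] at hT
        exact Finset.mem_filter.mpr ⟨Finset.mem_univ _, image_pref_adm hLE hT⟩
      · intro S hS
        have hadm : adm r S := (Finset.mem_filter.mp hS).2
        exact image_pref_permOf hadm
      · rintro ⟨π, T⟩ hp
        rw [Finset.mem_filter, Finset.mem_product] at hp
        obtain ⟨⟨-, hT⟩, hLE, hdes⟩ := hp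
        rw [Finset.mem_powerset] at hT
        simp only [permOf_image hT hdes, image_card_pref π hT]
      · intro S hS
        have hadm : adm r S := (Finset.mem_filter.mp hS).2
        rw [card_image_sub_one hadm]
    rw [hbij]
    have hsplit : (∑ p ∈ ((Finset.univ : Finset (Equiv.Perm (Fin n))) ×ˢ
            (Finset.range (n - 1)).powerset).filter
              (fun p => isLE r p.1 ∧ desSet p.1 ⊆ p.2), a ^ p.2.card)
        = ∑ π ∈ Finset.univ.filter (fun π : Equiv.Perm (Fin n) => isLE r π),
            ∑ T ∈ (Finset.range (n - 1)).powerset.filter (fun T => desSet π ⊆ T),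
              a ^ T.card := by
      rw [Finset.sum_filter, Finset.sum_product, Finset.sum_filter]
      refine Finset.sum_congr rfl (fun π _ => ?_)
      rw [Finset.sum_filter]
      by_cases h : isLE r π
      · simp [h]
      · simp [h]
    rw [hsplit]
    have hfe : (Finset.univ.filter (fun π : Equiv.Perm (Fin n) => isLE r π))
        = Finset.univ.filter (fun π : Equiv.Perm (Fin n) =>
            ∀ i j : Fin n, r i j → π i ≤ π j) :=
      Finset.filter_congr (fun π _ => Iff.rfl)
    rw [hfe]
    refine Finset.sum_congr rfl (fun π hπ => ?_)
    exact innerSumPow (desSet π) (n - 1) (Finset.filter_subset _ _) a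
  · -- the cardinality identity
    refine Finset.card_bij' (fun S _ => permOf S)
      (fun π _ => (Finset.range (n - 1)).image (pref π)) ?_ ?_ ?_ ?_
    · intro S hS
      have hadm : adm r S := ((Finset.mem_filter.mp hS).2).1
      exact Finset.mem_filter.mpr ⟨Finset.mem_univ _, permOf_isLE hcompat hadm⟩
    · intro π hπ
      have hLE : isLE r π := (Finset.mem_filter.mp hπ).2
      refine Finset.mem_filter.mpr ⟨Finset.mem_univ _,
        image_pref_adm hLE (Finset.Subset.refl _), ?_⟩
      rw [Finset.card_image_of_injOn (pref_injOn π (Finset.Subset.refl _)),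
        Finset.card_range]
    · intro S hS
      have h2 := (Finset.mem_filter.mp hS).2
      have hadm : adm r S := h2.1
      have hcardS : S.card = n - 1 := h2.2
      have hT : S.image (fun g => g.card - 1) = Finset.range (n - 1) := by
        apply Finset.eq_of_subset_of_card_le (image_sub_one_subset hadm)
        rw [card_image_sub_one hadm, Finset.card_range, hcardS]
      rw [← hT]
      exact image_pref_permOf hadm
    · intro π hπ
      exact permOf_image (Finset.Subset.refl _) (Finset.filter_subset _ _)
end
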